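/- arXiv:1402.0196 — 2 statements merged into one kernel-verified Lean document; each statement's English description precedes it below -/
import Mathlib

section
/- Every lobster that contains a perfect matching admits a graceful labeling. -/
open SimpleGraph

/-- The weight of an edge under a vertex labeling: `|f u - f v|`. -/
def edgeWt {V : Type*} (f : V → ℕ) : Sym2 V → ℕ :=
  Sym2.lift ⟨fun u v => ((f u : ℤ) - f v).natAbs, fun u v => by simp only []; omega⟩

/-- `f` is a graceful labeling of `G`: injective into `{0,...,m}` with induced
edge weights exactly `{1,...,m}`, where `m` is the number of edges. -/
def IsGracefulLabeling {V : Type*} (G : SimpleGraph V) (f : V → ℕ) : Prop :=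
  Function.Injective f ∧ (∀ v, f v ≤ G.edgeSet.ncard) ∧
    (edgeWt f) '' G.edgeSet = Set.Icc 1 G.edgeSet.ncard

/-- `G` admits a graceful labeling. -/
def IsGraceful {V : Type*} (G : SimpleGraph V) : Prop :=
  ∃ f : V → ℕ, IsGracefulLabeling G f

/-- `p` is a longest path in `G`. -/
def IsLongestPath {V : Type*} (G : SimpleGraph V) {u v : V} (p : G.Walk u v) : Prop :=
  p.IsPath ∧ ∀ (w x : V) (q : G.Walk w x), q.IsPath → q.length ≤ p.length

/-- `G` is a tree all of whose vertices are within distance `k` of some longest path.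
`k = 1` gives caterpillars, `k = 2` gives lobsters. -/
def IsKDistantTree {V : Type*} (G : SimpleGraph V) (k : ℕ) : Prop :=
  G.IsTree ∧ ∃ (u v : V) (p : G.Walk u v), IsLongestPath G p ∧
    ∀ a : V, ∃ b ∈ p.support, G.dist a b ≤ k

/-- `G` is a lobster shell: a lobster with a longest path `P` such that every vertex not
on `P` having a neighbor on `P` has degree exactly `2`. -/
def IsLobsterShell {V : Type*} (G : SimpleGraph V) : Prop :=
  G.IsTree ∧ ∃ (u v : V) (p : G.Walk u v), IsLongestPath G p ∧
    (∀ a : V, ∃ b ∈ p.support, G.dist a b ≤ 2) ∧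
    (∀ a : V, a ∉ p.support → (∃ b ∈ p.support, G.Adj a b) → (G.neighborSet a).ncard = 2)

/-- `f` is a bipartite labeling of `G`. -/
def IsBipartiteLabeling {V : Type*} (G : SimpleGraph V) (f : V → ℕ) : Prop :=
  Function.Injective f ∧ (∀ v, f v ≤ G.edgeSet.ncard) ∧
    ∃ c : ℤ, ∀ u v : V, G.Adj u v →
      ((f u : ℤ) ≤ c ∧ c < (f v : ℤ)) ∨ ((f v : ℤ) ≤ c ∧ c < (f u : ℤ))

/-- The number of distinct edge weights induced by `f` on `G`. -/
noncomputable def distinctWeightCount {V : Type*} (G : SimpleGraph V) (f : V → ℕ) : ℕ :=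
  ((edgeWt f) '' G.edgeSet).ncard

open scoped Finset

/-!
Contract the edges of the perfect matching. For a lobster the contracted tree is a caterpillar,
and peeling matched pairs off one end of the spine lists them so that each pair is attached to
the previous pair or to that pair's parent (`CaterpillarOrder`): at the head pair of the spine,
first remove the legs (off-spine neighbours) matched to a foot (an off-spine neighbour of a leg,
which within distance two of the spine must be a leaf), then the head pair itself.
Listed this way, a caterpillar on `k` vertices is gracefully labeled by `f`, counting upwards
from `0` on one side of the bipartition and downwards from `k - 1` on the other; the edge from
vertex `j` to its parent gets weight `k - j`. Label the two vertices of pair `i` by `2 f i` and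
`2k - 1 - 2 f i`, oriented so that contracted edges join vertices of the same kind: the matching
edges get the odd weights `|4 f i - (2k - 1)|` and the other edges the even weights `2 (k - j)`.
-/

/-- `par` lists a caterpillar on `{0, …, k-1}` spine vertex by spine vertex: every vertex is a
sibling or a child of its predecessor. -/
structure CaterpillarOrder (k : ℕ) (par : ℕ → ℕ) : Prop where
  par_lt : ∀ j, 1 ≤ j → j < k → par j < j
  par_eq : ∀ j, 2 ≤ j → j < k → par j = par (j - 1) ∨ par j = j - 1

theorem CaterpillarOrder.snoc {k t : ℕ} {par : ℕ → ℕ} (h : CaterpillarOrder k par) (ht : t < k)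
    (ht' : t = k - 1 ∨ t = par (k - 1)) :
    CaterpillarOrder (k + 1) (fun j => if j = k then t else par j) where
  par_lt j hj hjk := by
    by_cases hj' : j = k
    · simp only [hj', if_true]; omega
    · simp only [hj', if_false]; exact h.par_lt j hj (by omega)
  par_eq j hj hjk := by
    by_cases hj' : j = k
    · simp only [hj', if_true, show k - 1 ≠ k by omega, if_false]; tauto
    · simp only [hj', if_false, show j - 1 ≠ k by omega]; exact h.par_eq j hj (by omega)

namespace Caterpillar

variable {k : ℕ} {par : ℕ → ℕ}

/-- The parity of the depth of a vertex in the tree with parent map `par`; the `min` only makes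
the recursion structural and is inert when `par j < j`. -/
def side (par : ℕ → ℕ) : ℕ → Bool
  | 0 => false
  | j + 1 => !side par (min (par (j + 1)) j)

theorem side_eq_not_side_par {j : ℕ} (hj : 1 ≤ j) (hpar : par j < j) :
    side par j = !side par (par j) := by
  obtain ⟨j, rfl⟩ : ∃ i, j = i + 1 := ⟨j - 1, by omega⟩
  rw [side, min_eq_left (by omega)]

theorem side_eq_of_par_lt_of_lt (h : CaterpillarOrder k par) {j : ℕ} (hj : 1 ≤ j) (hjk : j < k)
    {i : ℕ} (hi : par j < i) (hij : i < j) : side par i = side par j := by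
  induction j with
  | zero => omega
  | succ j ih =>
    rcases h.par_eq (j + 1) (by omega) hjk with hpar | hpar <;>
      simp only [Nat.add_sub_cancel] at hpar
    · have hj : 1 ≤ j := by have := h.par_lt (j + 1) hj hjk; omega
      have hsucc : side par (j + 1) = side par j := by
        rw [side_eq_not_side_par hj (h.par_lt j hj (by omega)),
          side_eq_not_side_par (by omega) (h.par_lt (j + 1) (by omega) hjk), hpar]
      rw [hsucc]
      rcases Nat.lt_or_ge i j with hij' | hij'
      · exact ih hj (by omega) (hpar ▸ hi) hij'
      · rw [show i = j by omega]
    · omega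

def rank (par : ℕ → ℕ) (j : ℕ) : ℕ :=
  #{i ∈ Finset.range j | side par i = side par j}

theorem rank_le (j : ℕ) : rank par j ≤ j :=
  (Finset.card_filter_le _ _).trans (Finset.card_range j).le

theorem rank_lt_rank {i j : ℕ} (hij : i < j) (hs : side par i = side par j) :
    rank par i < rank par j := by
  refine Finset.card_lt_card (Finset.ssubset_iff_of_subset ?_ |>.mpr ⟨i, ?_, ?_⟩)
  · intro t
    simp only [Finset.mem_filter, Finset.mem_range]
    exact fun ⟨ht, hts⟩ => ⟨ht.trans hij, hts.trans hs⟩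
  · simp [hij, hs]
  · simp

theorem rank_add_rank_par (h : CaterpillarOrder k par) {j : ℕ} (hj : 1 ≤ j) (hjk : j < k) :
    rank par j + rank par (par j) + 1 = j := by
  have hpar := h.par_lt j hj hjk
  have hside := side_eq_not_side_par hj hpar
  have hother : {i ∈ Finset.range j | ¬side par i = side par j} =
      {i ∈ Finset.range (par j + 1) | side par i = side par (par j)} := by
    ext i
    simp only [Finset.mem_filter, Finset.mem_range, hside]
    constructor
    · rintro ⟨hij, hi⟩
      simp only [Bool.eq_not, not_not] at hi
      refine ⟨?_, hi⟩
      by_contra! hlt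
      have := side_eq_of_par_lt_of_lt h hj hjk (by omega : par j < i) hij
      simp [hside, hi] at this
    · rintro ⟨hi, hi'⟩
      exact ⟨by omega, by simp [hi']⟩
  have hsplit := Finset.card_filter_add_card_filter_not (s := Finset.range j)
    (fun i => side par i = side par j)
  rw [hother, Finset.range_add_one, Finset.filter_insert, if_pos rfl,
    Finset.card_insert_of_notMem (by simp), Finset.card_range] at hsplit
  exact hsplit

def count (k : ℕ) (par : ℕ → ℕ) (b : Bool) : ℕ :=
  #{i ∈ Finset.range k | side par i = b}

theorem count_false_add_count_true : count k par false + count k par true = k := by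
  have := Finset.card_filter_add_card_filter_not (s := Finset.range k)
    (fun i => side par i = false)
  simpa [count] using this

theorem rank_lt_count {i : ℕ} (hi : i < k) : rank par i < count k par (side par i) := by
  refine Finset.card_lt_card (Finset.ssubset_iff_of_subset ?_ |>.mpr ⟨i, ?_, ?_⟩)
  · intro t
    simp only [Finset.mem_filter, Finset.mem_range]
    exact fun ⟨ht, hts⟩ => ⟨by omega, hts⟩
  · simp [hi]
  · simp

def label (k : ℕ) (par : ℕ → ℕ) (i : ℕ) : ℕ :=
  if side par i then k - 1 - rank par i else rank par i

theorem label_lt {i : ℕ} (hi : i < k) : label k par i < k := by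
  have := rank_lt_count (par := par) hi
  have := count_false_add_count_true (k := k) (par := par)
  unfold label
  split <;> simp_all <;> omega

theorem label_injOn : Set.InjOn (label k par) (Set.Iio k) := by
  have hcount := count_false_add_count_true (k := k) (par := par)
  have key : ∀ {i j}, i < k → j < k → i < j → label k par i ≠ label k par j := by
    intro i j hi hj hij heq
    have hri := rank_lt_count (par := par) hi
    have hrj := rank_lt_count (par := par) hj
    unfold label at heq
    by_cases hs : side par i = side par j
    · have := rank_lt_rank hij hs
      cases hsj : side par j <;> simp_all
      omega
    · cases hsi : side par i <;> cases hsj : side par j <;> simp_all <;> omega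
  intro i hi j hj heq
  rcases lt_trichotomy i j with hij | hij | hij
  · exact absurd heq (key hi hj hij)
  · exact hij
  · exact absurd heq.symm (key hj hi hij)

theorem label_bijOn : Set.BijOn (label k par) (Set.Iio k) (Set.Iio k) :=
  (Set.finite_Iio k).injOn_iff_bijOn_of_mapsTo (fun _ hi => label_lt hi) |>.mp label_injOn

theorem natAbs_label_sub_label_par (h : CaterpillarOrder k par) {j : ℕ} (hj : 1 ≤ j)
    (hjk : j < k) : ((label k par j : ℤ) - label k par (par j)).natAbs = k - j := by
  have hside := side_eq_not_side_par hj (h.par_lt j hj hjk)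
  have hsum := rank_add_rank_par h hj hjk
  have := rank_le (par := par) j
  unfold label
  cases hs : side par (par j) <;> simp only [hs, Bool.not_false, Bool.not_true] at hside <;>
    simp only [hside, if_true, if_false, Bool.false_eq_true] <;> omega

end Caterpillar

section GracefulCriterion

variable {V : Type*} {G : SimpleGraph V}

theorem edgeWt_mk (f : V → ℕ) (u v : V) : edgeWt f s(u, v) = ((f u : ℤ) - f v).natAbs := rfl

theorem isGracefulLabeling_of_bijOn {f : V → ℕ} {N : ℕ} (hinj : Function.Injective f)
    (hle : ∀ v, f v ≤ N) (hbij : Set.BijOn (edgeWt f) G.edgeSet (Set.Icc 1 N)) :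
    IsGracefulLabeling G f := by
  have hcard : G.edgeSet.ncard = N := by
    rw [← hbij.injOn.ncard_image, hbij.image_eq, Set.ncard_Icc_nat]
    omega
  exact ⟨hinj, hcard ▸ hle, hcard ▸ hbij.image_eq⟩

end GracefulCriterion

def pairLabel (k : ℕ) (f : ℕ → ℕ) (x : ℕ × Bool) : ℕ :=
  if x.2 then 2 * f x.1 else 2 * k - 1 - 2 * f x.1

section PairLabel

variable {k : ℕ} {f : ℕ → ℕ}

theorem pairLabel_le (hf : Set.MapsTo f (Set.Iio k) (Set.Iio k)) {x : ℕ × Bool} (hx : x.1 < k) :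
    pairLabel k f x ≤ 2 * k - 1 := by
  have : f x.1 < k := hf hx
  unfold pairLabel
  split <;> omega

theorem pairLabel_injOn (hf : Set.MapsTo f (Set.Iio k) (Set.Iio k))
    (hinj : Set.InjOn f (Set.Iio k)) : Set.InjOn (pairLabel k f) {x | x.1 < k} := by
  rintro ⟨i, s⟩ (hi : i < k) ⟨i', s'⟩ (hi' : i' < k) heq
  have hfi : f i < k := hf hi
  have hfi' : f i' < k := hf hi'
  have hff : f i = f i' ∧ s = s' := by
    unfold pairLabel at heq
    cases s <;> cases s' <;>
      simp only [if_true, if_false, Bool.false_eq_true, and_true, and_false] at heq ⊢ <;> omega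
  rw [hinj hi hi' hff.1, hff.2]

theorem natAbs_pairLabel_false_sub_true (hf : Set.MapsTo f (Set.Iio k) (Set.Iio k)) {i : ℕ}
    (hi : i < k) :
    ((pairLabel k f (i, false) : ℤ) - pairLabel k f (i, true)).natAbs =
      ((4 * f i : ℤ) - (2 * k - 1)).natAbs := by
  have : f i < k := hf hi
  simp only [pairLabel, if_true, if_false, Bool.false_eq_true]
  omega

theorem natAbs_pairLabel_sub_pairLabel (hf : Set.MapsTo f (Set.Iio k) (Set.Iio k)) {i j : ℕ}
    (hi : i < k) (hj : j < k) (s : Bool) :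
    ((pairLabel k f (i, s) : ℤ) - pairLabel k f (j, s)).natAbs =
      2 * ((f i : ℤ) - f j).natAbs := by
  have : f i < k := hf hi
  have : f j < k := hf hj
  cases s <;> simp only [pairLabel, if_true, if_false, Bool.false_eq_true] <;> omega

theorem exists_natAbs_four_mul_sub_eq {w : ℕ} (hw : w % 2 = 1) (hwk : w ≤ 2 * k - 1) :
    ∃ a < k, ((4 * a : ℤ) - (2 * k - 1)).natAbs = w := by
  by_cases h4 : (2 * k - 1 + w) % 4 = 0
  · exact ⟨(2 * k - 1 + w) / 4, by omega, by omega⟩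
  · exact ⟨(2 * k - 1 - w) / 4, by omega, by omega⟩

end PairLabel

/-- A listing of the vertices of `A` as `k` pairs `φ (i, false) ~ φ (i, true)` such that
contracting the pairs yields the caterpillar `par`, the pair `j` being joined to the pair `par j`
by the edge between their vertices of side `side j`, and there are no other edges in `A`. -/
structure PairCaterpillar {V : Type*} (G : SimpleGraph V) (A : Finset V) where
  k : ℕ
  φ : ℕ × Bool → V
  par : ℕ → ℕ
  side : ℕ → Bool
  order : CaterpillarOrder k par
  bijOn : Set.BijOn φ {x | x.1 < k} A
  adj_pair : ∀ i < k, G.Adj (φ (i, false)) (φ (i, true))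
  adj_par : ∀ j, 1 ≤ j → j < k → G.Adj (φ (j, side j)) (φ (par j, side j))
  edge : ∀ a ∈ A, ∀ b ∈ A, G.Adj a b →
    (∃ i < k, s(a, b) = s(φ (i, false), φ (i, true))) ∨
      ∃ j, 1 ≤ j ∧ j < k ∧ s(a, b) = s(φ (j, side j), φ (par j, side j))

namespace PairCaterpillar

variable {V : Type*} {G : SimpleGraph V} {A : Finset V}

def pairEdge (m : PairCaterpillar G A) (i : ℕ) : Sym2 V :=
  s(m.φ (i, false), m.φ (i, true))

def parEdge (m : PairCaterpillar G A) (j : ℕ) : Sym2 V :=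
  s(m.φ (j, m.side j), m.φ (m.par j, m.side j))

theorem exists_eq_of_mem_edgeSet (m : PairCaterpillar G A) {e : Sym2 V} (he : e ∈ G.edgeSet)
    (heA : ∀ v ∈ e, v ∈ A) :
    (∃ i < m.k, e = m.pairEdge i) ∨ ∃ j, 1 ≤ j ∧ j < m.k ∧ e = m.parEdge j := by
  induction e using Sym2.ind with
  | _ a b => exact m.edge a (heA a (Sym2.mem_mk_left a b)) b (heA b (Sym2.mem_mk_right a b)) he

noncomputable def label (m : PairCaterpillar G A) : V → ℕ :=
  pairLabel m.k (Caterpillar.label m.k m.par) ∘ Function.invFunOn m.φ {x | x.1 < m.k}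

theorem label_φ (m : PairCaterpillar G A) {x : ℕ × Bool} (hx : x.1 < m.k) :
    m.label (m.φ x) = pairLabel m.k (Caterpillar.label m.k m.par) x := by
  rw [label, Function.comp_apply, m.bijOn.injOn.leftInvOn_invFunOn hx]

theorem label_injOn (m : PairCaterpillar G A) : Set.InjOn m.label A := by
  intro u hu v hv huv
  rw [← m.bijOn.surjOn.rightInvOn_invFunOn hu, ← m.bijOn.surjOn.rightInvOn_invFunOn hv,
    pairLabel_injOn Caterpillar.label_bijOn.mapsTo Caterpillar.label_injOn (m.bijOn.surjOn.mapsTo_invFunOn hu)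
      (m.bijOn.surjOn.mapsTo_invFunOn hv) huv]

theorem label_le (m : PairCaterpillar G A) {v : V} (hv : v ∈ A) : m.label v ≤ 2 * m.k - 1 :=
  pairLabel_le Caterpillar.label_bijOn.mapsTo (m.bijOn.surjOn.mapsTo_invFunOn hv)

theorem edgeWt_label_pairEdge (m : PairCaterpillar G A) {i : ℕ} (hi : i < m.k) :
    edgeWt m.label (m.pairEdge i) =
      ((4 * Caterpillar.label m.k m.par i : ℤ) - (2 * m.k - 1)).natAbs := by
  rw [pairEdge, edgeWt_mk, m.label_φ hi, m.label_φ hi,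
    natAbs_pairLabel_false_sub_true Caterpillar.label_bijOn.mapsTo hi]

theorem edgeWt_label_parEdge (m : PairCaterpillar G A) {j : ℕ} (hj : 1 ≤ j) (hjk : j < m.k) :
    edgeWt m.label (m.parEdge j) = 2 * (m.k - j) := by
  have hpj : m.par j < m.k := (m.order.par_lt j hj hjk).trans hjk
  rw [parEdge, edgeWt_mk, m.label_φ (x := (j, _)) hjk, m.label_φ (x := (m.par j, _)) hpj,
    natAbs_pairLabel_sub_pairLabel Caterpillar.label_bijOn.mapsTo hjk hpj,
    Caterpillar.natAbs_label_sub_label_par m.order hj hjk]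

theorem isGraceful [Fintype V] (m : PairCaterpillar G Finset.univ) : IsGraceful G := by
  have hedge {e : Sym2 V} (he : e ∈ G.edgeSet) :=
    m.exists_eq_of_mem_edgeSet he fun v _ => Finset.mem_univ v
  have hf := Caterpillar.label_bijOn (k := m.k) (par := m.par)
  refine ⟨m.label, isGracefulLabeling_of_bijOn (N := 2 * m.k - 1)
    (fun u v => m.label_injOn (by simp) (by simp)) (fun v => m.label_le (by simp)) ⟨?_, ?_, ?_⟩⟩
  · intro e he
    rcases hedge he with ⟨i, hi, rfl⟩ | ⟨j, hj, hjk, rfl⟩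
    · have : Caterpillar.label m.k m.par i < m.k := hf.mapsTo hi
      rw [m.edgeWt_label_pairEdge hi, Set.mem_Icc]
      omega
    · rw [m.edgeWt_label_parEdge hj hjk, Set.mem_Icc]
      omega
  · intro e he e' he' hee'
    rcases hedge he with ⟨i, hi, rfl⟩ | ⟨j, hj, hjk, rfl⟩ <;>
      rcases hedge he' with ⟨i', hi', rfl⟩ | ⟨j', hj', hjk', rfl⟩
    · rw [m.edgeWt_label_pairEdge hi, m.edgeWt_label_pairEdge hi'] at hee'
      have : Caterpillar.label m.k m.par i < m.k := hf.mapsTo hi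
      have : Caterpillar.label m.k m.par i' < m.k := hf.mapsTo hi'
      rw [hf.injOn hi hi' (by omega)]
    · rw [m.edgeWt_label_pairEdge hi, m.edgeWt_label_parEdge hj' hjk'] at hee'
      omega
    · rw [m.edgeWt_label_parEdge hj hjk, m.edgeWt_label_pairEdge hi'] at hee'
      omega
    · rw [m.edgeWt_label_parEdge hj hjk, m.edgeWt_label_parEdge hj' hjk'] at hee'
      rw [show j = j' by omega]
  · intro w ⟨hw1, hw2⟩
    rcases Nat.even_or_odd w with ⟨c, rfl⟩ | hodd
    · have hj : 1 ≤ m.k - c := by omega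
      refine ⟨m.parEdge (m.k - c), m.adj_par (m.k - c) hj (by omega), ?_⟩
      rw [m.edgeWt_label_parEdge hj (by omega)]
      omega
    · obtain ⟨a, ha, haw⟩ := exists_natAbs_four_mul_sub_eq (Nat.odd_iff.mp hodd) hw2
      obtain ⟨i, hi, rfl⟩ := hf.surjOn ha
      exact ⟨m.pairEdge i, m.adj_pair i hi, by rw [m.edgeWt_label_pairEdge hi, haw]⟩

/-- The pairs to which a new last pair may be attached without breaking the caterpillar order. -/
def IsTip (m : PairCaterpillar G A) (t : ℕ) : Prop :=
  t < m.k ∧ (t = m.k - 1 ∨ t = m.par (m.k - 1))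

variable [DecidableEq V]

def single {u w : V} (huw : G.Adj u w) : PairCaterpillar G {u, w} where
  k := 1
  φ x := if x.2 then w else u
  par _ := 0
  side _ := false
  order := ⟨fun _ _ _ => by omega, fun _ _ _ => by omega⟩
  bijOn := by
    refine ⟨?_, ?_, ?_⟩
    · rintro ⟨i, s⟩ -
      cases s <;> simp
    · rintro ⟨i, s⟩ (hi : i < 1) ⟨i', s'⟩ (hi' : i' < 1) h
      obtain rfl : i = 0 := by omega
      obtain rfl : i' = 0 := by omega
      cases s <;> cases s' <;> simp_all [huw.ne, huw.ne.symm]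
    · intro v hv
      simp only [Finset.coe_insert, Finset.coe_singleton, Set.mem_insert_iff,
        Set.mem_singleton_iff] at hv
      rcases hv with rfl | rfl
      · exact ⟨(0, false), by simp⟩
      · exact ⟨(0, true), by simp⟩
  adj_pair i _ := huw
  adj_par _ _ _ := by omega
  edge a ha b hb hab := by
    left
    refine ⟨0, by omega, ?_⟩
    simp only [Finset.mem_insert, Finset.mem_singleton] at ha hb
    rcases ha with rfl | rfl <;> rcases hb with rfl | rfl
    all_goals first | exact (G.irrefl hab).elim | simp [Sym2.eq_swap]

theorem isTip_single {u w : V} (huw : G.Adj u w) : (single huw).IsTip 0 :=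
  ⟨Nat.one_pos, Or.inl rfl⟩

def snoc (m : PairCaterpillar G A) {t : ℕ} (ht : m.IsTip t) (b : Bool) {u w : V} (hu : u ∉ A)
    (hw : w ∉ A) (huw : G.Adj u w) (hut : G.Adj u (m.φ (t, b)))
    (hu_nbr : ∀ v ∈ A, G.Adj u v → v = m.φ (t, b)) (hw_nbr : ∀ v ∈ A, ¬G.Adj w v) :
    PairCaterpillar G (insert u (insert w A)) where
  k := m.k + 1
  φ x := if x.1 = m.k then (if x.2 = b then u else w) else m.φ x
  par j := if j = m.k then t else m.par j
  side j := if j = m.k then b else m.side j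
  order := m.order.snoc ht.1 ht.2
  bijOn := by
    have hφ : Set.BijOn (fun x : ℕ × Bool => if x.1 = m.k then (if x.2 = b then u else w)
        else m.φ x) {x | x.1 < m.k} A :=
      m.bijOn.congr fun x (hx : x.1 < m.k) => by simp [hx.ne]
    have huw' : u ≠ w := huw.ne
    have hdom : {x : ℕ × Bool | x.1 < m.k + 1} =
        insert (m.k, b) (insert (m.k, !b) {x | x.1 < m.k}) := by
      ext ⟨i, s⟩
      simp only [Set.mem_ofPred_eq, Set.mem_insert_iff, Prod.mk.injEq]
      cases s <;> cases b <;> simp <;> omega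
    rw [hdom, Finset.coe_insert, Finset.coe_insert]
    convert (hφ.insert (a := (m.k, !b)) (by simpa using hw)).insert
      (a := (m.k, b)) (by simpa [huw'] using hu) using 2 <;> simp
  adj_pair i hi := by
    by_cases hik : i = m.k
    · cases b <;> simp [hik, huw, huw.symm]
    · simpa [hik] using m.adj_pair i (by omega)
  adj_par j hj hjk := by
    by_cases hjk' : j = m.k
    · simpa [hjk', ht.1.ne] using hut
    · have := m.order.par_lt j hj (by omega)
      simpa [hjk', show m.par j ≠ m.k by omega] using m.adj_par j hj (by omega)
  edge a ha c hc hac := by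
    have hk : t ≠ m.k := ht.1.ne
    have hk1 : 1 ≤ m.k := by have := ht.1; omega
    simp only [Finset.mem_insert] at ha hc
    rcases ha with rfl | rfl | ha <;> rcases hc with rfl | rfl | hc
    · exact (G.irrefl hac).elim
    · exact Or.inl ⟨m.k, by omega, by cases b <;> simp [Sym2.eq_swap]⟩
    · exact Or.inr ⟨m.k, hk1, by omega, by simp [hk, hu_nbr c hc hac]⟩
    · exact Or.inl ⟨m.k, by omega, by cases b <;> simp [Sym2.eq_swap]⟩
    · exact (G.irrefl hac).elim
    · exact absurd hac (hw_nbr c hc)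
    · exact Or.inr ⟨m.k, hk1, by omega, by simp [hk, hu_nbr a ha hac.symm, Sym2.eq_swap]⟩
    · exact absurd hac.symm (hw_nbr a ha)
    · rcases m.edge a ha c hc hac with ⟨i, hi, he⟩ | ⟨j, hj, hjk, he⟩
      · exact Or.inl ⟨i, by omega, by simpa [hi.ne] using he⟩
      · have := m.order.par_lt j hj hjk
        exact Or.inr ⟨j, hj, by omega, by simpa [hjk.ne, show m.par j ≠ m.k by omega] using he⟩

end PairCaterpillar

theorem Finset.insert_insert_erase_erase {α : Type*} [DecidableEq α] {s : Finset α} {a b : α}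
    (ha : a ∈ s) (hb : b ∈ s) (hab : a ≠ b) : insert a (insert b ((s.erase a).erase b)) = s := by
  rw [Finset.insert_erase (Finset.mem_erase.2 ⟨hab.symm, hb⟩), Finset.insert_erase ha]

section HasPairCaterpillar

variable {V : Type*} {G : SimpleGraph V} {p : V → V}

def HasPairCaterpillar (G : SimpleGraph V) (p : V → V) (A : Finset V) (a : V) : Prop :=
  ∃ (m : PairCaterpillar G A) (t : ℕ), m.IsTip t ∧ ∃ b, m.φ (t, b) = a ∧ m.φ (t, !b) = p a

theorem HasPairCaterpillar.partner (hp : Function.Involutive p) {A : Finset V} {a : V}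
    (h : HasPairCaterpillar G p A a) : HasPairCaterpillar G p A (p a) := by
  obtain ⟨m, t, ht, b, hb, hb'⟩ := h
  exact ⟨m, t, ht, !b, hb', by rw [Bool.not_not, hb, hp]⟩

variable [DecidableEq V]

theorem hasPairCaterpillar_pair (hadj : ∀ v, G.Adj v (p v)) (u : V) :
    HasPairCaterpillar G p {u, p u} u :=
  ⟨.single (hadj u), 0, PairCaterpillar.isTip_single _, false, rfl, rfl⟩

theorem HasPairCaterpillar.of_erase (hadj : ∀ v, G.Adj v (p v)) {A : Finset V} {a u y : V}
    (hu : u ∈ A) (hpu : p u ∈ A) (h : HasPairCaterpillar G p ((A.erase u).erase (p u)) a)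
    (hy : y = a ∨ y = p a) (huy : G.Adj u y)
    (hu_nbr : ∀ v ∈ (A.erase u).erase (p u), G.Adj u v → v = y)
    (hpu_nbr : ∀ v ∈ (A.erase u).erase (p u), ¬G.Adj (p u) v) :
    HasPairCaterpillar G p A a ∧ HasPairCaterpillar G p A u := by
  obtain ⟨m, t, ht, b, hb, hb'⟩ := h
  obtain ⟨c, rfl⟩ : ∃ c, m.φ (t, c) = y := by
    rcases hy with rfl | rfl
    exacts [⟨b, hb⟩, ⟨!b, hb'⟩]
  have hk : t ≠ m.k := ht.1.ne
  rw [← Finset.insert_insert_erase_erase hu hpu (hadj u).ne]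
  let m' := m.snoc ht c (by simp) (by simp) (hadj u) huy hu_nbr hpu_nbr
  refine ⟨⟨m', t, ?_, b, ?_, ?_⟩, ⟨m', m.k, ?_, c, ?_, ?_⟩⟩
  all_goals simp only [m', PairCaterpillar.IsTip, PairCaterpillar.snoc]
  all_goals simp [hk, hb, hb', ht.1.le]

end HasPairCaterpillar

theorem SimpleGraph.Subgraph.IsPerfectMatching.exists_involutive_adj {V : Type*}
    {G : SimpleGraph V} {M : G.Subgraph} (hM : M.IsPerfectMatching) :
    ∃ p : V → V, Function.Involutive p ∧ ∀ v, G.Adj v (p v) := by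
  rw [Subgraph.isPerfectMatching_iff] at hM
  choose p hp hpu using hM
  exact ⟨p, fun v => (hpu (p v) v (hp v).symm).symm, fun v => M.adj_sub (hp v)⟩

theorem SimpleGraph.Connected.eq_or_adj_or_exists_adj_adj_of_dist_le_two {V : Type*}
    {G : SimpleGraph V} (hG : G.Connected) {a b : V} (h : G.dist a b ≤ 2) :
    a = b ∨ G.Adj a b ∨ ∃ c, G.Adj a c ∧ G.Adj c b := by
  obtain ⟨w, hw⟩ := hG.exists_walk_length_eq_dist a b
  rw [← hw] at h
  match w with
  | .nil => exact Or.inl rfl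
  | .cons hac .nil => exact Or.inr (Or.inl hac)
  | .cons hac (.cons hcb .nil) => exact Or.inr (Or.inr ⟨_, hac, hcb⟩)
  | .cons _ (.cons _ (.cons _ _)) => simp at h

section Spine

variable {V : Type*} {G : SimpleGraph V} {l : List V}

open Walk

theorem exists_isPath_of_mem_of_isChain (hl : l.IsChain G.Adj) {s s' : V} (hs : s ∈ l)
    (hs' : s' ∈ l) : ∃ r : G.Walk s s', r.IsPath ∧ ∀ x ∈ r.support, x ∈ l := by
  classical
  have hne : l ≠ [] := List.ne_nil_of_mem hs
  let W := Walk.ofSupport l hne hl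
  have hW : W.support = l := support_ofSupport hne hl
  let r := ((W.takeUntil s (by rwa [hW])).reverse.append (W.takeUntil s' (by rwa [hW]))).bypass
  refine ⟨r, bypass_isPath _, fun x hx => hW ▸ ?_⟩
  have hx := support_bypass_subset_support _ hx
  rw [support_append, support_reverse, List.mem_append, List.mem_reverse] at hx
  rcases hx with hx | hx
  · exact support_takeUntil_subset_support _ _ hx
  · exact support_takeUntil_subset_support _ _ (List.mem_of_mem_tail hx)

def NearSpine (G : SimpleGraph V) (A : Finset V) (l : List V) : Prop :=
  ∀ v ∈ A, v ∈ l ∨ (∃ s ∈ l, G.Adj v s) ∨ ∃ x ∈ A, x ∉ l ∧ G.Adj v x ∧ ∃ s ∈ l, G.Adj x s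

theorem head?_eq_of_adj (hac : G.IsAcyclic) {h a : V}
    {t : List V} (hl : (h :: t).IsChain G.Adj) (hn : (h :: t).Nodup) (ha : a ∈ t)
    (hadj : G.Adj h a) : t.head? = some a := by
  cases t with
  | nil => simp at ha
  | cons c t =>
    let W := Walk.ofSupport (h :: c :: t) (List.cons_ne_nil _ _) hl
    have hW : W.support = h :: c :: t := Walk.support_ofSupport _ hl
    have := hac.eq_snd_of_adj_start (p := W) (by rw [Walk.isPath_def, hW]; exact hn) hadj
      (by rw [hW]; exact List.mem_cons_of_mem _ ha)
    rw [this, Walk.snd, Walk.getVert_eq_getD_support, hW]; rfl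

variable (hac : G.IsAcyclic) (hl : l.IsChain G.Adj)
include hac hl

theorem eq_and_support_eq_of_isPath {v s s' : V} (hs : s ∈ l) (hs' : s' ∈ l)
    {q : G.Walk v s} {q' : G.Walk v s'} (hq : q.IsPath) (hq' : q'.IsPath)
    (hql : ∀ x ∈ q.support, x ∈ l → x = s) (hq'l : ∀ x ∈ q'.support, x ∈ l → x = s') :
    s = s' ∧ q.support = q'.support := by
  obtain ⟨r, hr, hrl⟩ := exists_isPath_of_mem_of_isChain hl hs hs'
  have hqr : (q.append r).IsPath := by
    rw [isPath_def, support_append, List.nodup_append]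
    refine ⟨hq.support_nodup, hr.support_nodup.sublist (List.tail_sublist _), ?_⟩
    rintro x hx y hy rfl
    obtain rfl := hql x hx (hrl x (List.mem_of_mem_tail hy))
    have := hr.support_nodup
    rw [← cons_tail_support, List.nodup_cons] at this
    exact this.1 hy
  have hqq' : q.append r = q' :=
    congrArg Subtype.val ((hac.subsingleton_path v s').elim ⟨_, hqr⟩ ⟨q', hq'⟩)
  obtain rfl : s = s' :=
    hq'l s (hqq' ▸ (mem_support_append_iff _ _).mpr (Or.inl q.end_mem_support)) hs
  have : q = q' := congrArg Subtype.val ((hac.subsingleton_path v s).elim ⟨q, hq⟩ ⟨q', hq'⟩)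
  exact ⟨rfl, this ▸ rfl⟩

theorem eq_of_adj_of_adj_of_notMem {x s s' : V} (hx : x ∉ l) (hs : s ∈ l) (hs' : s' ∈ l)
    (hxs : G.Adj x s) (hxs' : G.Adj x s') : s = s' := by
  exact (eq_and_support_eq_of_isPath hac hl hs hs' (q := hxs.toWalk) (q' := hxs'.toWalk)
    (by simp [hxs.ne]) (by simp [hxs'.ne]) (by simp [hx]) (by simp [hx])).1

theorem not_adj_of_adj_of_adj {g x s s' : V} (hg : g ∉ l) (hx : x ∉ l) (hs : s ∈ l)
    (hxs : G.Adj x s) (hgx : G.Adj g x) (hs' : s' ∈ l) : ¬G.Adj g s' := by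
  intro hgs'
  have hgs : g ≠ s := fun h => hg (h ▸ hs)
  have := eq_and_support_eq_of_isPath hac hl hs hs' (q := .cons hgx hxs.toWalk)
    (q' := hgs'.toWalk) (by simp [hgx.ne, hxs.ne, hgs]) (by simp [hgs'.ne]) (by simp [hg, hx])
    (by simp [hg])
  simpa using congrArg List.length this.2

theorem eq_of_adj_of_nearSpine {A : Finset V} (hnear : NearSpine G A l) {g x s b : V}
    (hg : g ∉ l) (hx : x ∉ l) (hs : s ∈ l) (hxs : G.Adj x s) (hgx : G.Adj g x) (hb : b ∈ A)
    (hgb : G.Adj g b) : b = x := by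
  by_contra hbx
  have hgl : ∀ s' ∈ l, ¬G.Adj g s' := fun s' => not_adj_of_adj_of_adj hac hl hg hx hs hxs hgx
  have hbl : b ∉ l := fun h => hgl b h hgb
  have hgs : g ≠ s := fun h => hg (h ▸ hs)
  have hq : (Walk.cons hgx hxs.toWalk).IsPath := by simp [hgx.ne, hxs.ne, hgs]
  have hql : ∀ y ∈ (Walk.cons hgx hxs.toWalk).support, y ∈ l → y = s := by simp [hg, hx]
  rcases hnear b hb with hb' | ⟨s', hs', hbs'⟩ | ⟨y, -, hyl, hby, s', hs', hys'⟩
  · exact hbl hb'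
  · have hgs' : g ≠ s' := fun h => hg (h ▸ hs')
    have := eq_and_support_eq_of_isPath hac hl hs hs' hq (q' := .cons hgb hbs'.toWalk)
      (by simp [hgb.ne, hbs'.ne, hgs']) hql (by simp [hg, hbl])
    have := congrArg (·[1]?) this.2
    simp only [Adj.toWalk, support_cons, support_nil] at this
    exact hbx (by simpa using this.symm)
  · have hgy : g ≠ y := fun h => hgl s' hs' (h ▸ hys')
    have hgs' : g ≠ s' := fun h => hg (h ▸ hs')
    have hbs' : b ≠ s' := fun h => hbl (h ▸ hs')
    have := eq_and_support_eq_of_isPath hac hl hs hs' hq (q' := .cons hgb (.cons hby hys'.toWalk))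
      (by simp [hgb.ne, hby.ne, hys'.ne, hgy, hgs', hbs'])
      hql (by simp [hg, hbl, hyl])
    simpa using congrArg List.length this.2

end Spine

section Peeling

variable {V : Type*} {G : SimpleGraph V} {p : V → V} {A : Finset V} {l : List V}

/-- The state of the peeling: the vertices `A` not yet listed and the part `l` of the spine
they contain. -/
structure SpineConfig (G : SimpleGraph V) (p : V → V) (A : Finset V) (l : List V) : Prop where
  chain : l.IsChain G.Adj
  nodup : l.Nodup
  subset : ∀ s ∈ l, s ∈ A
  map_mem : ∀ v ∈ A, p v ∈ A
  near : NearSpine G A l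

variable [DecidableEq V]

theorem SpineConfig.erase_pair (hc : SpineConfig G p A l) (hp : Function.Involutive p)
    {u w : V} (hw : p u = w) {l' : List V} (hchain : l'.IsChain G.Adj) (hnodup : l'.Nodup)
    (hsub : ∀ s ∈ l', s ∈ l) (hl : ∀ s ∈ l, s ∈ l' ∨ s = u ∨ s = w) (hu : u ∉ l')
    (hw' : w ∉ l') (hnbr : ∀ v ∈ (A.erase u).erase w, G.Adj v u ∨ G.Adj v w → v ∈ l') :
    SpineConfig G p ((A.erase u).erase w) l' := by
  have hmem : ∀ v, v ∈ (A.erase u).erase w ↔ v ≠ w ∧ v ≠ u ∧ v ∈ A := by simp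
  refine ⟨hchain, hnodup, fun s hs => (hmem s).2 ⟨fun h => hw' (h ▸ hs),
    fun h => hu (h ▸ hs), hc.subset s (hsub s hs)⟩, fun v hv => ?_, fun v hv => ?_⟩
  · obtain ⟨hvw, hvu, hvA⟩ := (hmem v).1 hv
    refine (hmem _).2 ⟨fun h => hvu ?_, fun h => hvw ?_, hc.map_mem v hvA⟩
    · rw [← hp v, h, ← hw, hp]
    · rw [← hp v, h, hw]
  obtain ⟨hvw, hvu, hvA⟩ := (hmem v).1 hv
  rcases hc.near v hvA with hvl | ⟨s, hs, hvs⟩ | ⟨x, hxA, hxl, hvx, s, hs, hxs⟩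
  · exact Or.inl ((hl v hvl).resolve_right (by tauto))
  · rcases hl s hs with hs' | rfl | rfl
    · exact Or.inr (Or.inl ⟨s, hs', hvs⟩)
    · exact Or.inl (hnbr v hv (Or.inl hvs))
    · exact Or.inl (hnbr v hv (Or.inr hvs))
  · by_cases hx : x = u ∨ x = w
    · rcases hx with rfl | rfl
      · exact Or.inl (hnbr v hv (Or.inl hvx))
      · exact Or.inl (hnbr v hv (Or.inr hvx))
    have hx' : x ∈ (A.erase u).erase w := (hmem x).2 ⟨fun h => hx (Or.inr h),
      fun h => hx (Or.inl h), hxA⟩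
    rcases hl s hs with hs' | rfl | rfl
    · exact Or.inr (Or.inr ⟨x, hx', fun h => hxl (hsub x h), hvx, s, hs', hxs⟩)
    · exact absurd (hsub x (hnbr x hx' (Or.inl hxs))) hxl
    · exact absurd (hsub x (hnbr x hx' (Or.inr hxs))) hxl

theorem hasPairCaterpillar_of_erase_head (hadj : ∀ v, G.Adj v (p v))
    (hp : Function.Involutive p) {u w : V} (hw : p u = w) {l' : List V}
    (IH : ∀ a t, SpineConfig G p ((A.erase u).erase w) (a :: t) →
      HasPairCaterpillar G p ((A.erase u).erase w) a)
    (hc : SpineConfig G p A l) (hu : u ∈ l) (hchain : (u :: l').IsChain G.Adj)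
    (hnodup : l'.Nodup) (hsub : ∀ s ∈ l', s ∈ l) (hl : ∀ s ∈ l, s ∈ l' ∨ s = u ∨ s = w)
    (hul' : u ∉ l') (hwl' : w ∉ l')
    (hu_nbr : ∀ v ∈ (A.erase u).erase w, G.Adj u v → l'.head? = some v)
    (hw_nbr : ∀ v ∈ (A.erase u).erase w, ¬G.Adj w v) : HasPairCaterpillar G p A u := by
  subst hw
  have huA : u ∈ A := hc.subset u hu
  have hc' := hc.erase_pair hp rfl hchain.tail hnodup hsub hl hul' hwl' fun v hv hvu => by
    rcases hvu with hvu | hvu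
    · exact List.mem_of_mem_head? (hu_nbr v hv hvu.symm)
    · exact absurd hvu.symm (hw_nbr v hv)
  cases l' with
  | nil =>
    have hA := Finset.insert_insert_erase_erase huA (hc.map_mem u huA) (hadj u).ne
    have hA' : (A.erase u).erase (p u) = ∅ :=
      Finset.eq_empty_of_forall_notMem fun v hv => by simpa [NearSpine] using hc'.near v hv
    rw [hA', Finset.insert_empty] at hA
    exact hA ▸ hasPairCaterpillar_pair hadj u
  | cons a t =>
    refine ((IH a t hc').of_erase hadj huA (hc.map_mem u huA) (Or.inl rfl) hchain.rel
      (fun v hv huv => ?_) hw_nbr).2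
    simpa using (hu_nbr v hv huv).symm

/-- A leg `x` at the head pair whose partner `p x` is off the spine: `p x` is a pendant foot, and
the pair `{x, p x}` hangs off the head pair. -/
theorem hasPairCaterpillar_of_erase_leg (hac : G.IsAcyclic) (hadj : ∀ v, G.Adj v (p v))
    (hp : Function.Involutive p) {h x y : V} {t : List V} (hc : SpineConfig G p A (h :: t))
    (IH : ∀ a t, SpineConfig G p ((A.erase x).erase (p x)) (a :: t) →
      HasPairCaterpillar G p ((A.erase x).erase (p x)) a)
    (hxA : x ∈ A) (hxl : x ∉ h :: t) (hpxl : p x ∉ h :: t) (hyl : y ∈ h :: t)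
    (hy : y = h ∨ y = p h) (hxy : G.Adj x y) : HasPairCaterpillar G p A h := by
  have hpx_nbr : ∀ v ∈ A, G.Adj (p x) v → v = x := fun v hv hv' =>
    eq_of_adj_of_nearSpine hac hc.chain hc.near hpxl hxl hyl hxy (hadj x).symm hv hv'
  have hx_nbr : ∀ v ∈ A, G.Adj x v → v = y ∨ v = p x := by
    intro v hv hxv
    by_cases hvl : v ∈ h :: t
    · exact Or.inl (eq_of_adj_of_adj_of_notMem hac hc.chain hxl hvl hyl hxv hxy)
    · right
      rw [← eq_of_adj_of_nearSpine hac hc.chain hc.near hvl hxl hyl hxy hxv.symm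
        (hc.map_mem v hv) (hadj v), hp]
  have hc' := hc.erase_pair hp rfl hc.chain hc.nodup (fun s hs => hs) (fun s hs => Or.inl hs)
    hxl hpxl fun v hv hvx => by
      simp only [Finset.mem_erase] at hv
      rcases hvx with hvx | hvx
      · rcases hx_nbr v hv.2.2 hvx.symm with rfl | rfl
        exacts [hyl, absurd rfl hv.1]
      · exact absurd (hpx_nbr v hv.2.2 hvx.symm) hv.2.1
  refine ((IH h t hc').of_erase hadj hxA (hc.map_mem x hxA) hy hxy (fun v hv hxv => ?_)
    (fun v hv hv' => ?_)).1 <;> simp only [Finset.mem_erase] at hv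
  · exact (hx_nbr v hv.2.2 hxv).resolve_right hv.1
  · exact hv.2.1 (hpx_nbr v hv.2.2 hv')

theorem hasPairCaterpillar_of_partner_mem (hac : G.IsAcyclic) (hadj : ∀ v, G.Adj v (p v))
    (hp : Function.Involutive p) {h : V} {t : List V} (hc : SpineConfig G p A (h :: p h :: t))
    (IH : ∀ a t, SpineConfig G p ((A.erase (p h)).erase h) (a :: t) →
      HasPairCaterpillar G p ((A.erase (p h)).erase h) a)
    (hleg_h : ∀ v ∈ A, v ∉ h :: p h :: t → ¬G.Adj v h)
    (hleg_ph : ∀ v ∈ A, v ∉ h :: p h :: t → ¬G.Adj v (p h)) : HasPairCaterpillar G p A h := by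
  have hnd := hc.nodup
  simp only [List.nodup_cons, List.mem_cons, not_or] at hnd
  rw [← hp h]
  refine (hasPairCaterpillar_of_erase_head hadj hp (hp h) IH hc (by simp) hc.chain.tail hnd.2.2
    (fun s hs => by simp [hs]) (fun s hs => by simp only [List.mem_cons] at hs; tauto)
    hnd.2.1 hnd.1.2 (fun v hv hphv => ?_) (fun v hv hhv => ?_)).partner hp
  all_goals simp only [Finset.mem_erase] at hv
  all_goals by_cases hvl : v ∈ h :: p h :: t
  · rcases List.mem_cons.1 hvl with rfl | hvt
    · exact absurd rfl hv.1
    rcases List.mem_cons.1 hvt with rfl | hvt'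
    · exact absurd hphv G.irrefl
    · exact head?_eq_of_adj hac hc.chain.tail (List.nodup_cons.2 ⟨hnd.2.1, hnd.2.2⟩) hvt' hphv
  · exact (hleg_ph v hv.2.2 hvl hphv.symm).elim
  · have := head?_eq_of_adj hac hc.chain hc.nodup ((List.mem_cons.1 hvl).resolve_left hv.1) hhv
    simp only [List.head?_cons, Option.some.injEq] at this
    exact hv.2.1 this.symm
  · exact hleg_h v hv.2.2 hvl hhv.symm

theorem hasPairCaterpillar_of_partner_notMem (hac : G.IsAcyclic) (hadj : ∀ v, G.Adj v (p v))
    (hp : Function.Involutive p) {h : V} {t : List V} (hc : SpineConfig G p A (h :: t))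
    (IH : ∀ a t', SpineConfig G p ((A.erase h).erase (p h)) (a :: t') →
      HasPairCaterpillar G p ((A.erase h).erase (p h)) a)
    (hph : p h ∉ h :: t) (hleg_h : ∀ v ∈ A, v ∉ h :: t → G.Adj v h → v = p h) :
    HasPairCaterpillar G p A h := by
  have hhl : h ∈ h :: t := List.mem_cons_self
  have hnd := List.nodup_cons.1 hc.nodup
  refine hasPairCaterpillar_of_erase_head hadj hp rfl IH hc hhl hc.chain hnd.2
    (fun s hs => List.mem_cons_of_mem _ hs) (fun s hs => by simp only [List.mem_cons] at hs; tauto)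
    hnd.1 (fun h' => hph (List.mem_cons_of_mem _ h')) (fun v hv hhv => ?_) (fun v hv hphv => ?_)
  all_goals simp only [Finset.mem_erase] at hv
  all_goals by_cases hvl : v ∈ h :: t
  · exact head?_eq_of_adj hac hc.chain hc.nodup ((List.mem_cons.1 hvl).resolve_left hv.2.1) hhv
  · exact absurd (hleg_h v hv.2.2 hvl hhv.symm) hv.1
  · exact hv.2.1 (eq_of_adj_of_adj_of_notMem hac hc.chain hph hvl hhl hphv (hadj h).symm)
  · -- `v` would be a foot at the leg `p h`, whose only neighbour is `p h`, so `p v = p h`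
    have := eq_of_adj_of_nearSpine hac hc.chain hc.near hvl hph hhl (hadj h).symm hphv.symm
      (hc.map_mem v hv.2.2) (hadj v)
    exact hvl (hp.injective this ▸ hhl)

theorem hasPairCaterpillar_of_spineConfig (hac : G.IsAcyclic) (hadj : ∀ v, G.Adj v (p v))
    (hp : Function.Involutive p) {h : V} {t : List V} (hc : SpineConfig G p A (h :: t)) :
    HasPairCaterpillar G p A h := by
  induction hn : A.card using Nat.strong_induction_on generalizing A h t with
  | _ n IH =>
  subst hn
  have IH' : ∀ {u w : V}, u ∈ A → ∀ a t, SpineConfig G p ((A.erase u).erase w) (a :: t) →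
      HasPairCaterpillar G p ((A.erase u).erase w) a := fun hu a t hc' =>
    IH _ ((Finset.card_le_card (Finset.erase_subset _ _)).trans_lt
      (Finset.card_erase_lt_of_mem hu)) hc' rfl
  have hhl : h ∈ h :: t := List.mem_cons_self
  by_cases hleg : ∃ x ∈ A, x ∉ h :: t ∧ p x ∉ h :: t ∧
      ∃ y ∈ h :: t, (y = h ∨ y = p h) ∧ G.Adj x y
  · obtain ⟨x, hxA, hxl, hpxl, y, hyl, hy, hxy⟩ := hleg
    exact hasPairCaterpillar_of_erase_leg hac hadj hp hc (IH' hxA) hxA hxl hpxl hyl hy hxy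
  simp only [not_exists, not_and] at hleg
  -- every other leg at the head pair has its partner on the spine, hence is the head pair itself
  have hleg_h : ∀ v ∈ A, v ∉ h :: t → G.Adj v h → v = p h := by
    intro v hv hvl hvh
    by_cases hpvl : p v ∈ h :: t
    · rw [← eq_of_adj_of_adj_of_notMem hac hc.chain hvl hpvl hhl (hadj v) hvh, hp]
    · exact absurd hvh (hleg v hv hvl hpvl h hhl (Or.inl rfl))
  by_cases hph : p h ∈ h :: t
  · have ht := head?_eq_of_adj hac hc.chain hc.nodup
      ((List.mem_cons.1 hph).resolve_left (hadj h).ne.symm) (hadj h)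
    obtain ⟨t, rfl⟩ : ∃ t', t = p h :: t' := by
      cases t with
      | nil => simp at ht
      | cons c t => exact ⟨t, by simpa using ht⟩
    refine hasPairCaterpillar_of_partner_mem hac hadj hp hc (IH' (hc.subset _ hph))
      (fun v hv hvl hvh => hvl (hleg_h v hv hvl hvh ▸ hph)) fun v hv hvl hvph => ?_
    by_cases hpvl : p v ∈ h :: p h :: t
    · have := eq_of_adj_of_adj_of_notMem hac hc.chain hvl hpvl hph (hadj v) hvph
      exact hvl (by rw [← hp v, this, hp]; exact hhl)
    · exact hleg v hv hvl hpvl (p h) hph (Or.inr rfl) hvph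
  · exact hasPairCaterpillar_of_partner_notMem hac hadj hp hc (IH' (hc.subset _ hhl)) hph hleg_h

end Peeling

theorem stmt7 {V : Type*} [Fintype V] (G : SimpleGraph V)
    (hL : IsKDistantTree G 2) (M : G.Subgraph) (hM : M.IsPerfectMatching) :
    IsGraceful G := by
  classical
  obtain ⟨hT, _, _, P, hP, hnear⟩ := hL
  obtain ⟨p, hp, hadj⟩ := hM.exists_involutive_adj
  have hc : SpineConfig G p Finset.univ P.support := by
    refine ⟨P.isChain_adj_support, hP.1.support_nodup, fun _ _ => Finset.mem_univ _,
      fun _ _ => Finset.mem_univ _, fun a _ => ?_⟩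
    obtain ⟨b, hb, hab⟩ := hnear a
    rcases hT.connected.eq_or_adj_or_exists_adj_adj_of_dist_le_two hab with
      rfl | hab | ⟨c, hac, hcb⟩
    · exact Or.inl hb
    · exact Or.inr (Or.inl ⟨b, hb, hab⟩)
    · by_cases hc : c ∈ P.support
      · exact Or.inr (Or.inl ⟨c, hc, hac⟩)
      · exact Or.inr (Or.inr ⟨c, Finset.mem_univ c, hc, hac, b, hb, hcb⟩)
  rw [← P.cons_tail_support] at hc
  obtain ⟨m, -⟩ := hasPairCaterpillar_of_spineConfig hT.isAcyclic hadj hp hc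
  exact m.isGraceful
end

section
/- In every lobster shell, there exists an endpoint u of a longest path P and a matching M of T that covers all vertices except possibly u; in particular, if the order of T is odd, T has a matching missing only an endpoint of a longest path. -/
open SimpleGraph

/-!
Every vertex off the longest path `P` has exactly one neighbour off `P`. A vertex adjacent to `P`
has degree two and, the graph being a tree, only one neighbour on `P`; a vertex at distance two
from `P` with a second neighbour off `P` would have that neighbour at distance three from `P`.
So the edges of `T - P` form a perfect matching of `T - P`, and `P` is matched from its far end,
leaving at most its first vertex uncovered.
-/

namespace SimpleGraph

variable {V : Type*} {G : SimpleGraph V}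

lemma Subgraph.isMatching_induce_top {s : Set V} (h : ∀ x ∈ s, ∃! y, y ∈ s ∧ G.Adj x y) :
    ((⊤ : G.Subgraph).induce s).IsMatching := by
  intro x hx
  obtain ⟨y, hy, huniq⟩ := h x hx
  exact ⟨y, ⟨hx, hy⟩, fun z ⟨_, hz, hxz⟩ => huniq z ⟨hz, hxz⟩⟩

namespace Walk

lemma IsPath.append {u v w : V} {p : G.Walk u v} {q : G.Walk v w}
    (hp : p.IsPath) (hq : q.IsPath) (h : ∀ x ∈ p.support, x ∈ q.support → x = v) :
    (p.append q).IsPath := by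
  have hq' := hq.support_nodup
  rw [← cons_tail_support, List.nodup_cons] at hq'
  rw [isPath_def, support_append, List.nodup_append]
  refine ⟨hp.support_nodup, hq'.2, fun x hx y hy hxy => ?_⟩
  subst hxy
  exact hq'.1 (h x hx (List.mem_of_mem_tail hy) ▸ hy)

lemma IsPath.exists_isPath_of_mem_support [DecidableEq V] {s t : V} {p : G.Walk s t}
    (hp : p.IsPath) {x y : V} (hx : x ∈ p.support) (hy : y ∈ p.support) :
    ∃ q : G.Walk x y, q.IsPath ∧ ∀ z ∈ q.support, z ∈ p.support := by
  by_cases h : x ∈ (p.takeUntil y hy).support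
  · exact ⟨(p.takeUntil y hy).dropUntil x h, (hp.takeUntil hy).dropUntil h,
      fun z hz => p.support_takeUntil_subset_support hy
        ((p.takeUntil y hy).support_dropUntil_subset_support h hz)⟩
  · have h2 : x ∈ (p.dropUntil y hy).support := by
      rw [← p.take_spec hy, mem_support_append_iff] at hx
      tauto
    refine ⟨((p.dropUntil y hy).takeUntil x h2).reverse,
      ((hp.dropUntil hy).takeUntil h2).reverse, fun z hz => ?_⟩
    rw [support_reverse, List.mem_reverse] at hz
    exact p.support_dropUntil_subset_support hy
      ((p.dropUntil y hy).support_takeUntil_subset_support h2 hz)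

lemma IsPath.exists_isMatching {u v : V} {p : G.Walk u v} (hp : p.IsPath) :
    ∃ M : G.Subgraph, M.IsMatching ∧ M.verts ⊆ {x | x ∈ p.support} ∧
      ∀ x ∈ p.support, x ≠ u → x ∈ M.verts := by
  induction p with
  | nil => exact ⟨⊥, fun _ h => h.elim, by simp, by simp⟩
  | @cons u w v huw q ih =>
    rw [cons_isPath_iff] at hp
    obtain ⟨M, hM, hMq, hqM⟩ := ih hp.1
    have hcover : ∀ x ∈ (cons huw q).support, x ≠ u → x ∈ q.support := by
      intro x hx hxu
      simpa [hxu] using hx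
    by_cases hw : w ∈ M.verts
    · refine ⟨M, hM, fun x hx => List.mem_cons_of_mem _ (hMq hx), fun x hx hxu => ?_⟩
      by_cases hxw : x = w
      · exact hxw ▸ hw
      · exact hqM x (hcover x hx hxu) hxw
    · refine ⟨M ⊔ G.subgraphOfAdj huw, hM.sup (.subgraphOfAdj huw) ?_, ?_, ?_⟩
      · rw [hM.support_eq_verts, (Subgraph.IsMatching.subgraphOfAdj huw).support_eq_verts,
          subgraphOfAdj_verts, Set.disjoint_insert_right, Set.disjoint_singleton_right]
        exact ⟨fun hu => hp.2 (hMq hu), hw⟩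
      · rintro x (hx | hx | hx)
        · exact List.mem_cons_of_mem _ (hMq hx)
        · simp [hx]
        · simp [show x = w from hx]
      · intro x hx hxu
        by_cases hxw : x = w
        · simp [hxw]
        · exact Or.inl (hqM x (hcover x hx hxu) hxw)

end Walk

lemma IsTree.length_eq_dist (hT : G.IsTree) {a b : V} {q : G.Walk a b} (hq : q.IsPath) :
    q.length = G.dist a b := by
  obtain ⟨w, hw⟩ := hT.connected.exists_walk_length_eq_dist a b
  rw [← hw, (hT.existsUnique_path a b).unique hq (w.isPath_of_length_eq_dist hw)]

variable [DecidableEq V] {s t : V} {p : G.Walk s t}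

lemma IsTree.dist_eq_length_add_dist (hT : G.IsTree) (hp : p.IsPath) {a b e : V}
    {q : G.Walk a b} (hq : q.IsPath) (hqp : ∀ z ∈ q.support, z ∈ p.support → z = b)
    (hb : b ∈ p.support) (he : e ∈ p.support) : G.dist a e = q.length + G.dist b e := by
  obtain ⟨r, hr, hrp⟩ := hp.exists_isPath_of_mem_support hb he
  have hqr := hq.append hr fun z hz hzr => hqp z hz (hrp z hzr)
  rw [← hT.length_eq_dist hqr, ← hT.length_eq_dist hr, Walk.length_append]

lemma IsTree.eq_of_adj_of_notMem_support (hT : G.IsTree) (hp : p.IsPath) {a b b' : V}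
    (ha : a ∉ p.support) (hb : b ∈ p.support) (hb' : b' ∈ p.support)
    (hab : G.Adj a b) (hab' : G.Adj a b') : b = b' := by
  have hqp : ∀ z ∈ hab.toWalk.support, z ∈ p.support → z = b := by
    simp only [Adj.toWalk, Walk.support_cons, Walk.support_nil, List.mem_cons,
      List.not_mem_nil, or_false]
    rintro z (rfl | rfl) hz
    exacts [absurd hz ha, rfl]
  have h := hT.dist_eq_length_add_dist hp hab.isPath_toWalk hqp hb hb'
  rw [dist_eq_one_iff_adj.mpr hab', Adj.length_toWalk] at h
  exact ((hT.connected.preconnected b b').dist_eq_zero_iff).mp (by omega)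

lemma IsTree.existsUnique_adj_notMem_support_of_adj (hT : G.IsTree) (hp : p.IsPath)
    {x b : V} (hx : x ∉ p.support) (hb : b ∈ p.support) (hxb : G.Adj x b)
    (hdeg : (G.neighborSet x).ncard = 2) : ∃! y, y ∉ p.support ∧ G.Adj x y := by
  obtain ⟨c, hc⟩ : ∃ c, G.neighborSet x \ {b} = {c} := Set.ncard_eq_one.mp <| by
    rw [Set.ncard_sdiff_singleton_of_mem (s := G.neighborSet x) hxb, hdeg]
  have hxc : c ∈ G.neighborSet x \ {b} := hc ▸ rfl
  have hcp : c ∉ p.support := fun hcp =>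
    hxc.2 (hT.eq_of_adj_of_notMem_support hp hx hcp hb hxc.1 hxb)
  refine ⟨c, ⟨hcp, hxc.1⟩, fun z ⟨hzP, hxz⟩ => ?_⟩
  have hz : z ∈ G.neighborSet x \ {b} := ⟨hxz, fun hzb : z = b => hzP (hzb ▸ hb)⟩
  rwa [hc] at hz

lemma IsTree.existsUnique_adj_notMem_support_of_not_adj (hT : G.IsTree) (hp : p.IsPath)
    (hdist : ∀ a : V, ∃ b ∈ p.support, G.dist a b ≤ 2) {x : V} (hx : x ∉ p.support)
    (hxp : ∀ b ∈ p.support, ¬G.Adj x b) : ∃! y, y ∉ p.support ∧ G.Adj x y := by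
  obtain ⟨e, he, hxe⟩ := hdist x
  obtain ⟨w, hw⟩ := hT.connected.exists_walk_length_eq_dist x e
  match w, hw with
  | .nil, _ => exact absurd he hx
  | .cons hadj .nil, _ => exact absurd hadj (hxp _ he)
  | .cons (v := m) hxm (.cons hme .nil), _ =>
    have hmp : m ∉ p.support := fun hmp => hxp m hmp hxm
    refine ⟨m, ⟨hmp, hxm⟩, fun z ⟨hzp, hxz⟩ => ?_⟩
    by_contra hzm
    obtain ⟨e', he', hze'⟩ := hdist z
    have hq : (Walk.cons hxz.symm (Walk.cons hxm hme.toWalk)).IsPath := by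
      have hxne : x ≠ e := fun h => hx (h ▸ he)
      have hzne : z ≠ e := fun h => hzp (h ▸ he)
      simp [hxz.ne', hxm.ne, hme.ne, hzm, hxne, hzne]
    have := hT.dist_eq_length_add_dist hp hq (by simp_all) he he'
    simp only [Walk.length_cons] at this
    omega
  | .cons _ (.cons _ (.cons _ _)), hw => simp only [Walk.length_cons] at hw; omega

lemma IsTree.existsUnique_adj_notMem_support (hT : G.IsTree) (hp : p.IsPath)
    (hdist : ∀ a : V, ∃ b ∈ p.support, G.dist a b ≤ 2)
    (hdeg : ∀ a : V, a ∉ p.support → (∃ b ∈ p.support, G.Adj a b) →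
      (G.neighborSet a).ncard = 2)
    {x : V} (hx : x ∉ p.support) : ∃! y, y ∉ p.support ∧ G.Adj x y := by
  by_cases hxp : ∃ b ∈ p.support, G.Adj x b
  · obtain ⟨b, hb, hxb⟩ := hxp
    exact hT.existsUnique_adj_notMem_support_of_adj hp hx hb hxb (hdeg x hx ⟨b, hb, hxb⟩)
  · push Not at hxp
    exact hT.existsUnique_adj_notMem_support_of_not_adj hp hdist hx hxp

end SimpleGraph

theorem stmt10_general {V : Type*} (G : SimpleGraph V)
    (h : IsLobsterShell G) :
    ∃ (u v : V) (p : G.Walk u v), IsLongestPath G p ∧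
      ∃ M : G.Subgraph, M.IsMatching ∧ ∀ w : V, w ≠ u → w ∈ M.verts := by
  classical
  obtain ⟨hT, u, v, p, hlp, hdist, hdeg⟩ := h
  obtain ⟨M, hM, hMp, hpM⟩ := hlp.1.exists_isMatching
  set M' := (⊤ : G.Subgraph).induce {x | x ∉ p.support}
  have hM' : M'.IsMatching := Subgraph.isMatching_induce_top fun _ hx =>
    hT.existsUnique_adj_notMem_support hlp.1 hdist hdeg hx
  have hdisj : Disjoint M.support M'.support := by
    rw [hM.support_eq_verts, hM'.support_eq_verts, Subgraph.induce_verts]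
    exact Set.disjoint_left.mpr fun x hx hx' => hx' (hMp hx)
  refine ⟨u, v, p, hlp, M ⊔ M', hM.sup hM' hdisj, fun w hw => ?_⟩
  by_cases hwp : w ∈ p.support
  · exact Or.inl (hpM w hwp hw)
  · exact Or.inr hwp

theorem stmt10 {V : Type*} [Fintype V] (G : SimpleGraph V)
    (h : IsLobsterShell G) :
    ∃ (u v : V) (p : G.Walk u v), IsLongestPath G p ∧
      ∃ M : G.Subgraph, M.IsMatching ∧ ∀ w : V, w ≠ u → w ∈ M.verts :=
  stmt10_general G h
end
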